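/- arXiv:2304.05937 — 4 statements merged into one kernel-verified Lean document; each statement's English description precedes it below -/
import Mathlib

section
/- Let G be a finite group and g, h ∈ G elements that do not commute. If the order of gh is at least k, then the 2k elements 1, g, gh, ghg, ..., (gh)^{k-1}, (gh)^{k-1}g are pairwise distinct. -/
/-- If `g, h` do not commute in a finite group and the order of `gh` is at least `k`,
then the `2k` elements `1, g, gh, ghg, …, (gh)^{k-1}, (gh)^{k-1}g` are pairwise distinct. -/
theorem stmt_1 {G : Type*} [Group G] [Fintype G] (g h : G) (hcomm : g * h ≠ h * g)
    (k : ℕ) (hk : 0 < k) (hord : k ≤ orderOf (g * h)) :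
    ((List.range k).flatMap (fun i => [(g * h) ^ i, (g * h) ^ i * g])).Nodup := by
  have hg : ∀ m : ℤ, g ≠ (g * h) ^ m := by
    intro m hm
    apply hcomm
    have hc : Commute (g * h) ((g * h) ^ m) := Commute.zpow_right (Commute.refl (g * h)) m
    rw [← hm] at hc
    have heq : g * (h * g) = g * (g * h) := by
      rw [← mul_assoc]; rw [hc.eq]
    exact (mul_left_cancel heq).symm
  have hpow : ∀ i j : ℕ, i < k → j < k → (g * h) ^ i = (g * h) ^ j → i = j := by
    intro i j hi hj hij
    exact pow_injOn_Iio_orderOf (Set.mem_Iio.2 (lt_of_lt_of_le hi hord))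
      (Set.mem_Iio.2 (lt_of_lt_of_le hj hord)) hij
  have hmix : ∀ i j : ℕ, (g * h) ^ i ≠ (g * h) ^ j * g := by
    intro i j hij
    have key : (g * h) ^ ((i : ℤ) - j) = g := by
      rw [sub_eq_neg_add, zpow_add, zpow_neg, zpow_natCast, zpow_natCast, hij,
        inv_mul_cancel_left]
    exact hg _ key.symm
  rw [List.nodup_flatMap]
  constructor
  · intro x _
    simp only [List.nodup_cons, List.mem_singleton, List.not_mem_nil, List.nodup_nil,
      and_true, not_false_iff]
    intro hx
    exact hmix x x hx
  · rw [List.pairwise_iff_getElem]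
    intro a b ha hb hab
    simp only [List.length_range] at ha hb
    simp only [List.getElem_range, Function.onFun, List.disjoint_left]
    intro x hx hx'
    have hne : a ≠ b := Nat.ne_of_lt hab
    simp only [List.mem_cons, List.mem_singleton, List.not_mem_nil, or_false] at hx hx'
    rcases hx with rfl | rfl <;> rcases hx' with h1 | h1
    · exact hne (hpow _ _ ha hb h1)
    · exact hmix _ _ h1
    · exact hmix _ _ h1.symm
    · exact hne (hpow _ _ ha hb (mul_right_cancel h1))
end

section
/- Let G be a finite group and g, h ∈ G non-commuting elements. Then the list 1, g, gh, ghg, ..., (gh)^{k-1}, (gh)^{k-1}g enumerates every element of G exactly once (where k = |G|/2) if and only if the order of gh equals half the order of G. -/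
/-!
Put `a = g * h`. Since `g` does not commute with `a`, `g ∉ ⟨a⟩`, so the entries `a ^ i` and
`a ^ i * g` of the list lie in different cosets of `⟨a⟩`. Hence the list, which has `|G|` entries,
enumerates `G` iff it has no repetition, iff `a ^ 0, …, a ^ (k - 1)` are distinct, iff
`k ≤ orderOf a`. As `⟨a⟩` is a proper subgroup, `orderOf a ≤ |G| / 2 = k` anyway.
-/

theorem List.flatMap_pair_perm {α β : Type*} (l : List α) (f g : α → β) :
    (l.flatMap fun x => [f x, g x]).Perm (l.map f ++ l.map g) := by
  induction l with
  | nil => simp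
  | cons x l ih =>
    simpa only [flatMap_cons, map_cons, cons_append, nil_append, perm_cons]
      using (ih.cons (g x)).trans perm_middle.symm

theorem List.Nodup.forall_mem_of_length_eq_card {α : Type*} [Fintype α] {l : List α}
    (hl : l.Nodup) (hlen : l.length = Fintype.card α) (x : α) : x ∈ l := by
  classical
  have huniv : l.toFinset = Finset.univ :=
    Finset.eq_univ_of_card _ (by rw [toFinset_card_of_nodup hl, hlen])
  exact mem_toFinset.mp (huniv ▸ Finset.mem_univ x)

theorem Subgroup.nodup_append_map_mul_iff {G : Type*} [Group G] {H : Subgroup G} {g : G}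
    (hg : g ∉ H) {l : List G} (hl : ∀ x ∈ l, x ∈ H) :
    (l ++ l.map (· * g)).Nodup ↔ l.Nodup := by
  rw [List.nodup_append, List.nodup_map_iff (mul_left_injective g)]
  refine ⟨fun h => h.1, fun h => ⟨h, h, ?_⟩⟩
  intro x hx _ hy hxy
  obtain ⟨y, hyl, rfl⟩ := List.mem_map.mp hy
  subst hxy
  exact hg (by simpa using H.mul_mem (H.inv_mem (hl y hyl)) (hl _ hx))

theorem nodup_map_pow_range_iff {G : Type*} [Monoid G] {a : G} (ha : IsOfFinOrder a) (k : ℕ) :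
    ((List.range k).map (a ^ ·)).Nodup ↔ k ≤ orderOf a := by
  rw [List.nodup_map_iff_inj_on List.nodup_range]
  constructor
  · intro hinj
    by_contra! hlt
    exact ha.orderOf_pos.ne
      (hinj 0 (by simp; omega) (orderOf a) (by simpa using hlt) (by simp [pow_orderOf_eq_one]))
  · intro hk m hm n hn hmn
    exact pow_injOn_Iio_orderOf (by simp at hm ⊢; omega) (by simp at hn ⊢; omega) hmn

theorem Subgroup.two_mul_card_le_of_ne_top {G : Type*} [Group G] [Finite G] {H : Subgroup G}
    (hH : H ≠ ⊤) : 2 * Nat.card H ≤ Nat.card G := by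
  rw [← H.card_mul_index, mul_comm]
  exact Nat.mul_le_mul_left _ (H.one_lt_index_of_ne_top hH)

theorem notMem_zpowers_mul_of_not_commute {G : Type*} [Group G] {g h : G}
    (hgh : ¬Commute g h) : g ∉ Subgroup.zpowers (g * h) := by
  intro hmem
  obtain ⟨n, hn⟩ := Subgroup.mem_zpowers_iff.mp hmem
  have hcomm : Commute (g * h) g := by simpa only [hn] using (Commute.zpow_self (g * h) n).symm
  exact hgh ((IsLeftRegular.all g).commute_mul_left_iff.mp hcomm)

/-- For non-commuting `g, h` in a finite group of order `2k`, the list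
`1, g, gh, ghg, …, (gh)^{k-1}, (gh)^{k-1}g` enumerates every element of `G`
exactly once if and only if `gh` has order `k = |G|/2`. -/
theorem stmt_2 {G : Type*} [Group G] [Fintype G] (g h : G) (hcomm : g * h ≠ h * g)
    (k : ℕ) (hcard : Fintype.card G = 2 * k) :
    (((List.range k).flatMap (fun i => [(g * h) ^ i, (g * h) ^ i * g])).Nodup ∧
      ∀ x : G, x ∈ (List.range k).flatMap (fun i => [(g * h) ^ i, (g * h) ^ i * g])) ↔
    orderOf (g * h) = Fintype.card G / 2 := by
  set a := g * h
  have hg : g ∉ Subgroup.zpowers a := notMem_zpowers_mul_of_not_commute hcomm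
  have hle : 2 * orderOf a ≤ 2 * k := by
    rw [← hcard, ← Nat.card_zpowers, ← Nat.card_eq_fintype_card]
    exact Subgroup.two_mul_card_le_of_ne_top fun htop => hg (htop ▸ Subgroup.mem_top g)
  set L := (List.range k).map (a ^ ·)
  have hperm : ((List.range k).flatMap fun i => [a ^ i, a ^ i * g]).Perm (L ++ L.map (· * g)) := by
    rw [List.map_map]
    exact List.flatMap_pair_perm ..
  have hlen : ((List.range k).flatMap fun i => [a ^ i, a ^ i * g]).length = Fintype.card G := by
    rw [hperm.length_eq]
    simp [L, hcard, two_mul]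
  rw [and_iff_left_of_imp (·.forall_mem_of_length_eq_card hlen), hperm.nodup_iff,
    Subgroup.nodup_append_map_mul_iff hg (by simp [L, Subgroup.npow_mem_zpowers]),
    nodup_map_pow_range_iff (isOfFinOrder_of_finite a), hcard]
  omega
end

section
/- Let Γ_m be the group with presentation ⟨a, b ∣ a² = b², a^{4m} = b^{4m} = (ab)^m = (ba)^m = 1⟩ for m ≥ 2. Then Γ_m has order 4m². -/
/-- The defining relations of `Γ_m = ⟨a, b ∣ a² = b², a^{4m} = b^{4m} = (ab)^m = (ba)^m = 1⟩`,
as elements of the free group on two generators `a = of 0`, `b = of 1`. -/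
def gammaRels (m : ℕ) : Set (FreeGroup (Fin 2)) :=
  {FreeGroup.of 0 ^ 2 * (FreeGroup.of 1 ^ 2)⁻¹,
   FreeGroup.of 0 ^ (4 * m), FreeGroup.of 1 ^ (4 * m),
   (FreeGroup.of 0 * FreeGroup.of 1) ^ m, (FreeGroup.of 1 * FreeGroup.of 0) ^ m}

/-!
Put `x = ab` and `z = a² = b²`. Then `z` is central, `x ^ m = 1`, `z ^ (2m) = 1` and
`a x a⁻¹ = x⁻¹ z²`, so every element of `Γ_m` is `x^i z^j a^e` with `i < m`, `j < 2m`, `e < 2`.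
These `4m²` words are distinct: `Γ_m` acts on two sheets `ZMod (2m) × Bool`, with `a` and `b`
exchanging the sheets and shifting by one on the way out of the `false` resp. `true` sheet. Then
`z` shifts both sheets by `1` and `x` shifts only the `true` sheet by `2`, so the images of
`(0, false)` and `(0, true)` under `x^i z^j a^e` determine `e`, `j` and `2i mod 2m`.
-/

theorem zpow_eq_zpow_mul_pow_val {G : Type*} [Group G] (g : G) (n : ℕ) [NeZero n] (k : ℤ) :
    g ^ k = (g ^ n) ^ (k / n) * g ^ (k : ZMod n).val := by
  rw [← zpow_natCast g (ZMod.val _), ZMod.val_intCast, ← zpow_natCast, ← zpow_mul, ← zpow_add,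
    Int.mul_ediv_add_emod]

theorem ZMod.natCast_mul_val_injective {k m : ℕ} [NeZero m] (hk : k ≠ 0) :
    Function.Injective fun i : ZMod m => ((k * i.val : ℕ) : ZMod (k * m)) := by
  intro i i' h
  have hlt : ∀ i : ZMod m, k * i.val < k * m := fun i =>
    Nat.mul_lt_mul_of_pos_left i.val_lt (Nat.pos_of_ne_zero hk)
  rw [ZMod.natCast_eq_natCast_iff', Nat.mod_eq_of_lt (hlt i), Nat.mod_eq_of_lt (hlt i')] at h
  exact ZMod.val_injective m (Nat.eq_of_mul_eq_mul_left (Nat.pos_of_ne_zero hk) h)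

namespace GammaGroup

open Equiv

section Sheets

variable {n : ℕ}

def shiftPerm (u v : ZMod n) : Perm (ZMod n × Bool) where
  toFun q := (q.1 + cond q.2 v u, q.2)
  invFun q := (q.1 - cond q.2 v u, q.2)
  left_inv q := by simp
  right_inv q := by simp

def swapPerm (u v : ZMod n) : Perm (ZMod n × Bool) where
  toFun q := (q.1 + cond q.2 v u, !q.2)
  invFun q := (q.1 - cond q.2 u v, !q.2)
  left_inv := by rintro ⟨t, _ | _⟩ <;> simp
  right_inv := by rintro ⟨t, _ | _⟩ <;> simp

@[simp]
lemma shiftPerm_apply (u v : ZMod n) (q : ZMod n × Bool) :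
    shiftPerm u v q = (q.1 + cond q.2 v u, q.2) := rfl

@[simp]
lemma swapPerm_apply (u v : ZMod n) (q : ZMod n × Bool) :
    swapPerm u v q = (q.1 + cond q.2 v u, !q.2) := rfl

lemma shiftPerm_mul_shiftPerm (u v u' v' : ZMod n) :
    shiftPerm u v * shiftPerm u' v' = shiftPerm (u + u') (v + v') := by
  ext ⟨t, _ | _⟩ <;> simp <;> abel

lemma swapPerm_mul_swapPerm (u v u' v' : ZMod n) :
    swapPerm u v * swapPerm u' v' = shiftPerm (u' + v) (v' + u) := by
  ext ⟨t, _ | _⟩ <;> simp [add_assoc]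

lemma swapPerm_sq (u v : ZMod n) : swapPerm u v ^ 2 = shiftPerm (u + v) (u + v) := by
  rw [pow_two, swapPerm_mul_swapPerm, add_comm v]

lemma shiftPerm_pow (u v : ZMod n) (k : ℕ) : shiftPerm u v ^ k = shiftPerm (k • u) (k • v) := by
  induction k with
  | zero => ext ⟨t, _ | _⟩ <;> simp
  | succ k ih => rw [pow_succ, ih, shiftPerm_mul_shiftPerm, succ_nsmul, succ_nsmul]

lemma shiftPerm_zero : shiftPerm (0 : ZMod n) 0 = 1 := by
  ext ⟨t, _ | _⟩ <;> simp

lemma shiftPerm_injective {u v u' v' : ZMod n} (h : shiftPerm u v = shiftPerm u' v') :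
    u = u' ∧ v = v' := by
  have hf := congrArg (fun σ : Perm (ZMod n × Bool) => (σ (0, false)).1) h
  have ht := congrArg (fun σ : Perm (ZMod n × Bool) => (σ (0, true)).1) h
  simp only [shiftPerm_apply, cond_false, cond_true, zero_add] at hf ht
  exact ⟨hf, ht⟩

lemma shiftPerm_mul_swapPerm_pow_injective {u v u' v' : ZMod n} {k k' : ℕ} (hk : k < 2)
    (hk' : k' < 2) (h : shiftPerm u v * swapPerm 1 0 ^ k = shiftPerm u' v' * swapPerm 1 0 ^ k') :
    u = u' ∧ v = v' ∧ k = k' := by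
  obtain rfl : k = k' := by
    have hsheet := congrArg (fun σ : Perm (ZMod n × Bool) => (σ (0, false)).2) h
    interval_cases k <;> interval_cases k' <;> simp at hsheet ⊢
  obtain ⟨rfl, rfl⟩ := shiftPerm_injective (mul_right_cancel h)
  exact ⟨rfl, rfl, rfl⟩

end Sheets

variable (m : ℕ)

def a : PresentedGroup (gammaRels m) := PresentedGroup.of 0
def b : PresentedGroup (gammaRels m) := PresentedGroup.of 1
def x : PresentedGroup (gammaRels m) := a m * b m
def z : PresentedGroup (gammaRels m) := a m ^ 2

lemma a_sq_eq_b_sq : a m ^ 2 = b m ^ 2 := by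
  have h := PresentedGroup.one_of_mem (rels := gammaRels m)
    (x := FreeGroup.of 0 ^ 2 * (FreeGroup.of 1 ^ 2)⁻¹) (by simp [gammaRels])
  rw [map_mul, map_inv, map_pow, map_pow, mul_inv_eq_one] at h
  exact h

lemma z_pow_two_mul : z m ^ (2 * m) = 1 := by
  have h := PresentedGroup.one_of_mem (rels := gammaRels m)
    (x := FreeGroup.of 0 ^ (4 * m)) (by simp [gammaRels])
  rw [z, ← pow_mul, show 2 * (2 * m) = 4 * m by ring]
  rwa [map_pow] at h

lemma x_pow : x m ^ m = 1 := by
  have h := PresentedGroup.one_of_mem (rels := gammaRels m)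
    (x := (FreeGroup.of 0 * FreeGroup.of 1) ^ m) (by simp [gammaRels])
  rwa [map_pow, map_mul] at h

lemma commute_z (g : PresentedGroup (gammaRels m)) : Commute (z m) g := by
  have hgen : Set.range (PresentedGroup.of (rels := gammaRels m)) ⊆
      Subgroup.centralizer {z m} := by
    rintro _ ⟨i, rfl⟩
    rw [SetLike.mem_coe, Subgroup.mem_centralizer_singleton_iff]
    fin_cases i
    · exact ((Commute.refl (a m)).pow_right 2).eq
    · rw [z, a_sq_eq_b_sq]
      exact ((Commute.refl (b m)).pow_right 2).eq
  have hle := Subgroup.closure_le _ |>.mpr hgen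
  rw [PresentedGroup.closure_range_of] at hle
  exact (Subgroup.mem_centralizer_singleton_iff.mp (hle (Subgroup.mem_top g))).symm

lemma x_mul_b_mul_a : x m * (b m * a m) = z m ^ 2 := by
  calc x m * (b m * a m) = a m * b m ^ 2 * a m := by simp only [x, pow_two, mul_assoc]
    _ = z m ^ 2 := by rw [← a_sq_eq_b_sq, z]; group

lemma a_mul_x_mul_a_inv : a m * x m * (a m)⁻¹ = (x m)⁻¹ * z m ^ 2 := by
  rw [← x_mul_b_mul_a, inv_mul_cancel_left]
  calc a m * x m * (a m)⁻¹ = (a m)⁻¹ * (z m * x m * (z m)⁻¹) * a m := by simp only [z]; group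
    _ = b m * a m := by rw [(commute_z m (x m)).eq, mul_inv_cancel_right, x]; group

lemma a_mul_x_zpow (i : ℤ) : a m * x m ^ i = x m ^ (-i) * z m ^ (2 * i) * a m := by
  have hconj : a m * x m ^ i * (a m)⁻¹ = x m ^ (-i) * z m ^ (2 * i) := by
    rw [← conj_zpow, a_mul_x_mul_a_inv, ((commute_z m (x m)⁻¹).pow_left 2).symm.mul_zpow,
      inv_zpow', ← zpow_natCast, ← zpow_mul, Nat.cast_ofNat]
  rw [← hconj]
  group

lemma a_mul_x_zpow_mul_z_zpow_mul_a_zpow (i j k : ℤ) :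
    a m * (x m ^ i * z m ^ j * a m ^ k) = x m ^ (-i) * z m ^ (2 * i + j) * a m ^ (1 + k) :=
  calc a m * (x m ^ i * z m ^ j * a m ^ k)
      = (a m * x m ^ i) * z m ^ j * a m ^ k := by simp only [mul_assoc]
    _ = x m ^ (-i) * z m ^ (2 * i) * (a m * z m ^ j) * a m ^ k := by
        rw [a_mul_x_zpow]; simp only [mul_assoc]
    _ = x m ^ (-i) * z m ^ (2 * i) * (z m ^ j * a m) * a m ^ k := by
        rw [((commute_z m (a m)).zpow_left j).eq]
    _ = x m ^ (-i) * z m ^ (2 * i + j) * a m ^ (1 + k) := by group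

lemma exists_eq_x_zpow_mul_z_zpow_mul_a_zpow (g : PresentedGroup (gammaRels m)) :
    ∃ i j k : ℤ, g = x m ^ i * z m ^ j * a m ^ k := by
  let P (g : PresentedGroup (gammaRels m)) : Prop := ∃ i j k : ℤ, g = x m ^ i * z m ^ j * a m ^ k
  have hx (n : ℤ) (g) : P g → P (x m ^ n * g) := by
    rintro ⟨i, j, k, rfl⟩
    exact ⟨n + i, j, k, by simp only [zpow_add, mul_assoc]⟩
  have hz (n : ℤ) (g) : P g → P (z m ^ n * g) := by
    rintro ⟨i, j, k, rfl⟩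
    refine ⟨i, n + j, k, ?_⟩
    rw [← mul_assoc, ← mul_assoc, ((commute_z m _).zpow_left n).eq, zpow_add]
    group
  have ha (g) : P g → P (a m * g) := by
    rintro ⟨i, j, k, rfl⟩
    exact ⟨-i, 2 * i + j, 1 + k, a_mul_x_zpow_mul_z_zpow_mul_a_zpow m i j k⟩
  have hg : g ∈ Subgroup.closure (Set.range (PresentedGroup.of (rels := gammaRels m))) := by simp
  induction hg using Subgroup.closure_induction_left with
  | one => exact ⟨0, 0, 0, by simp⟩
  | mul_left s hs g _ hg =>
    obtain ⟨i, rfl⟩ := hs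
    fin_cases i
    · exact ha g hg
    · have hb : b m * g = z m ^ (-1 : ℤ) * (a m * (x m ^ (1 : ℤ) * g)) := by
        simp only [z, x]; group
      exact hb ▸ hz _ _ (ha _ (hx _ _ hg))
  | inv_mul_cancel s hs g _ hg =>
    obtain ⟨i, rfl⟩ := hs
    fin_cases i
    · have ha' : (a m)⁻¹ * g = z m ^ (-1 : ℤ) * (a m * g) := by simp only [z]; group
      exact ha' ▸ hz _ _ (ha _ hg)
    · have hb' : (b m)⁻¹ * g = x m ^ (-1 : ℤ) * (a m * g) := by simp only [x]; group
      exact hb' ▸ hx _ _ (ha _ hg)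

def normalForm (p : ZMod m × ZMod (2 * m) × ZMod 2) : PresentedGroup (gammaRels m) :=
  x m ^ p.1.val * z m ^ p.2.1.val * a m ^ p.2.2.val

lemma normalForm_surjective [NeZero m] : Function.Surjective (normalForm m) := by
  intro g
  obtain ⟨i, j, k, rfl⟩ := exists_eq_x_zpow_mul_z_zpow_mul_a_zpow m g
  refine ⟨(i, ((j + k / 2 : ℤ) : ZMod (2 * m)), k), ?_⟩
  have hx : x m ^ i = x m ^ (i : ZMod m).val := by
    rw [zpow_eq_zpow_mul_pow_val (x m) m i, x_pow, one_zpow, one_mul]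
  have hz : z m ^ (j + k / 2) = z m ^ ((j + k / 2 : ℤ) : ZMod (2 * m)).val := by
    rw [zpow_eq_zpow_mul_pow_val (z m) (2 * m), z_pow_two_mul, one_zpow, one_mul]
  have ha : a m ^ k = z m ^ (k / 2) * a m ^ (k : ZMod 2).val :=
    zpow_eq_zpow_mul_pow_val (a m) 2 k
  rw [normalForm, ← hx, ← hz, ha, zpow_add]
  group

lemma lift_swapPerm_eq_one_of_mem_gammaRels :
    ∀ r ∈ gammaRels m,
      FreeGroup.lift ![(swapPerm 1 0 : Perm (ZMod (2 * m) × Bool)), swapPerm 0 1] r = 1 := by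
  have h2m : (2 * m) • (1 : ZMod (2 * m)) = 0 := by rw [nsmul_one, ZMod.natCast_self]
  have hm2 : m • (2 : ZMod (2 * m)) = 0 := by
    simpa [nsmul_eq_mul, mul_comm] using ZMod.natCast_self (2 * m)
  simp only [gammaRels, Set.mem_insert_iff, Set.mem_singleton_iff]
  rintro r (rfl | rfl | rfl | rfl | rfl) <;>
    simp only [map_mul, map_inv, map_pow, FreeGroup.lift_apply_of, Matrix.cons_val_zero,
      Matrix.cons_val_one]
  · rw [swapPerm_sq, swapPerm_sq, add_comm, mul_inv_cancel]
  · rw [show 4 * m = 2 * (2 * m) by ring, pow_mul, swapPerm_sq, shiftPerm_pow, add_zero, h2m,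
      shiftPerm_zero]
  · rw [show 4 * m = 2 * (2 * m) by ring, pow_mul, swapPerm_sq, shiftPerm_pow, zero_add, h2m,
      shiftPerm_zero]
  · rw [swapPerm_mul_swapPerm, shiftPerm_pow, add_zero, one_add_one_eq_two, smul_zero, hm2,
      shiftPerm_zero]
  · rw [swapPerm_mul_swapPerm, shiftPerm_pow, add_zero, one_add_one_eq_two, smul_zero, hm2,
      shiftPerm_zero]

def toPerm : PresentedGroup (gammaRels m) →* Perm (ZMod (2 * m) × Bool) :=
  PresentedGroup.toGroup (lift_swapPerm_eq_one_of_mem_gammaRels m)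

lemma toPerm_a : toPerm m (a m) = swapPerm 1 0 := PresentedGroup.toGroup.of _

lemma toPerm_b : toPerm m (b m) = swapPerm 0 1 := PresentedGroup.toGroup.of _

lemma toPerm_x : toPerm m (x m) = shiftPerm 0 2 := by
  rw [x, map_mul, toPerm_a, toPerm_b, swapPerm_mul_swapPerm]
  norm_num

lemma toPerm_z : toPerm m (z m) = shiftPerm 1 1 := by
  rw [z, map_pow, toPerm_a, swapPerm_sq, add_zero]

lemma toPerm_normalForm [NeZero m] (p : ZMod m × ZMod (2 * m) × ZMod 2) :
    toPerm m (normalForm m p) =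
      shiftPerm p.2.1 (2 * (p.1.val : ZMod (2 * m)) + p.2.1) * swapPerm 1 0 ^ p.2.2.val := by
  rw [normalForm, map_mul, map_mul, map_pow, map_pow, map_pow, toPerm_x, toPerm_z, toPerm_a,
    shiftPerm_pow, shiftPerm_pow, shiftPerm_mul_shiftPerm]
  simp only [smul_zero, nsmul_eq_mul, mul_one, ZMod.natCast_zmod_val, zero_add, mul_comm]

lemma normalForm_injective [NeZero m] : Function.Injective (normalForm m) := by
  rintro ⟨i, j, e⟩ ⟨i', j', e'⟩ h
  have hperm := congrArg (toPerm m) h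
  rw [toPerm_normalForm, toPerm_normalForm] at hperm
  obtain ⟨rfl, hi, he⟩ :=
    shiftPerm_mul_swapPerm_pow_injective (ZMod.val_lt e) (ZMod.val_lt e') hperm
  rw [add_left_inj] at hi
  obtain rfl : i = i' := ZMod.natCast_mul_val_injective two_ne_zero (by push_cast; exact hi)
  rw [ZMod.val_injective 2 he]

end GammaGroup

/-- The group `Γ_m` has order `4m²`. -/
theorem stmt_4 (m : ℕ) (hm : 2 ≤ m) :
    Nat.card (PresentedGroup (gammaRels m)) = 4 * m ^ 2 := by
  have : NeZero m := ⟨by omega⟩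
  rw [← Nat.card_eq_of_bijective _
      ⟨GammaGroup.normalForm_injective m, GammaGroup.normalForm_surjective m⟩,
    Nat.card_prod, Nat.card_prod, Nat.card_zmod, Nat.card_zmod, Nat.card_zmod]
  ring
end

section
/- Let m ≥ 2, let ω ∈ ℂ be a primitive 2m-th root of unity, and define 2×2 matrices A = [[0, ω], [1, 0]] and B = [[0, 1], [ω, 0]]. Then A² = B², A^{4m} = B^{4m} = I, (AB)^m = (BA)^m = I, and the order of A is exactly 4m. -/
open Matrix

/-- For `ω` a primitive `2m`-th root of unity, the matrices `A = [[0, ω], [1, 0]]`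
and `B = [[0, 1], [ω, 0]]` satisfy `A² = B²`, `A^{4m} = B^{4m} = 1`,
`(AB)^m = (BA)^m = 1`, and `A` has order exactly `4m`. -/
theorem stmt_5 (m : ℕ) (hm : 2 ≤ m) (ω : ℂ) (hω : IsPrimitiveRoot ω (2 * m)) :
    let A : Matrix (Fin 2) (Fin 2) ℂ := !![0, ω; 1, 0]
    let B : Matrix (Fin 2) (Fin 2) ℂ := !![0, 1; ω, 0]
    A ^ 2 = B ^ 2 ∧ A ^ (4 * m) = 1 ∧ B ^ (4 * m) = 1 ∧
      (A * B) ^ m = 1 ∧ (B * A) ^ m = 1 ∧ orderOf A = 4 * m := by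
  intro A B
  have hω1 : ω ^ (2 * m) = 1 := hω.pow_eq_one
  have hω2 : (ω * ω) ^ m = 1 := by
    rw [show ω * ω = ω ^ 2 by ring, ← pow_mul]; exact hω1
  have hA2 : A ^ 2 = ω • 1 := by
    ext i j
    fin_cases i <;> fin_cases j <;>
      simp [A, pow_two, Matrix.mul_apply, Fin.sum_univ_two, Matrix.one_apply]
  have hB2 : B ^ 2 = ω • 1 := by
    ext i j
    fin_cases i <;> fin_cases j <;>
      simp [B, pow_two, Matrix.mul_apply, Fin.sum_univ_two, Matrix.one_apply]
  have hpow : ∀ j : ℕ, A ^ (2 * j) = ω ^ j • 1 := by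
    intro j
    rw [pow_mul, hA2, smul_pow, one_pow]
  have hA4m : A ^ (4 * m) = 1 := by
    rw [show 4 * m = 2 * (2 * m) by ring, hpow, hω1, one_smul]
  have hB4m : B ^ (4 * m) = 1 := by
    rw [show 4 * m = 2 * (2 * m) by ring, pow_mul, hB2, smul_pow, one_pow, hω1, one_smul]
  have hAB : A * B = Matrix.diagonal ![ω * ω, 1] := by
    ext i j
    fin_cases i <;> fin_cases j <;>
      simp [A, B, Matrix.mul_apply, Fin.sum_univ_two, Matrix.diagonal]
  have hBA : B * A = Matrix.diagonal ![1, ω * ω] := by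
    ext i j
    fin_cases i <;> fin_cases j <;>
      simp [A, B, Matrix.mul_apply, Fin.sum_univ_two, Matrix.diagonal]
  have hABm : (A * B) ^ m = 1 := by
    rw [hAB, Matrix.diagonal_pow]
    ext i j
    fin_cases i <;> fin_cases j <;> simp [Matrix.one_apply, hω2]
  have hBAm : (B * A) ^ m = 1 := by
    rw [hBA, Matrix.diagonal_pow]
    ext i j
    fin_cases i <;> fin_cases j <;> simp [Matrix.one_apply, hω2]
  refine ⟨hA2.trans hB2.symm, hA4m, hB4m, hABm, hBAm, ?_⟩
  rw [orderOf_eq_iff (by omega)]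
  refine ⟨hA4m, fun k hk hk0 hcontra => ?_⟩
  rcases Nat.even_or_odd k with ⟨j, hj⟩ | ⟨j, hj⟩
  · -- k = 2j even: A^k = ω^j • 1
    subst hj
    rw [show j + j = 2 * j by ring, hpow] at hcontra
    have h00 : (ω ^ j • (1 : Matrix (Fin 2) (Fin 2) ℂ)) 0 0 = (1 : Matrix (Fin 2) (Fin 2) ℂ) 0 0 := by
      rw [hcontra]
    simp [Matrix.one_apply] at h00
    have hdvd : 2 * m ∣ j := (hω.pow_eq_one_iff_dvd j).mp h00
    have hjlt : j < 2 * m := by omega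
    have hj0 : 0 < j := by omega
    exact absurd (Nat.le_of_dvd hj0 hdvd) (by omega)
  · -- k = 2j + 1 odd: A^k = ω^j • A, which has (0,0) entry 0
    subst hj
    rw [pow_succ, hpow] at hcontra
    have h00 : ((ω ^ j • (1 : Matrix (Fin 2) (Fin 2) ℂ)) * A) 0 0 = (1 : Matrix (Fin 2) (Fin 2) ℂ) 0 0 := by
      rw [hcontra]
    simp [A, Matrix.mul_apply, Fin.sum_univ_two, Matrix.one_apply] at h00
end
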